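/- Let E ⊆ ℂ be compact, let closedBall(c_1, ρ_1), …, closedBall(c_m, ρ_m) be pairwise disjoint closed balls in ℂ with ρ_j > 0, and suppose E ⊆ ⋃_{j=1}^m ball(c_j, ρ_j) (the union of the corresponding open balls). Then every function f : ℂ → ℂ that is admissible for E satisfies ‖f′(∞)‖ ≤ ρ_1 + ⋯ + ρ_m. -/

import Mathlib

open Filter Bornology

/-- `f` is admissible for the compact set `E` with limit `L` at infinity and
derivative `c` at infinity: `f` is holomorphic on `ℂ \ E`, bounded by `1` there,
`f → L` and `z·(f z − L) → c` as `z → ∞`. -/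
def Admissible (E : Set ℂ) (f : ℂ → ℂ) (L c : ℂ) : Prop :=
  DifferentiableOn ℂ f Eᶜ ∧ (∀ z ∈ Eᶜ, ‖f z‖ ≤ 1) ∧
    Tendsto f (cobounded ℂ) (nhds L) ∧
    Tendsto (fun z => z * (f z - L)) (cobounded ℂ) (nhds c)

/-- The analytic capacity of `E`: the supremum of `‖f′(∞)‖` over admissible `f`. -/
noncomputable def analyticCapacity (E : Set ℂ) : ℝ :=
  sSup {r : ℝ | ∃ f L c, Admissible E f L c ∧ r = ‖c‖}

/-!
By compactness the radii can be shrunk to `r j < ρ j` with `E` still inside the balls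
`ball (c j) (r j)`. Put `g = f - L`. The Cauchy integral of `g` over `C(c j, r j)` is holomorphic
outside that circle, the one over `C(c j, ρ j)` is holomorphic inside, and on the annulus between
them they differ by `2πi g`. Gluing them ball by ball gives an entire function vanishing at
infinity, hence zero by Liouville: outside the balls,
`2πi g(w) = ∑ j ∮_{C(c j, r j)} g(z) / (w - z) dz`.
Multiplying by `w` and letting `w → ∞` gives `2πi f′(∞) = ∑ j ∮_{C(c j, r j)} f`, and each of
these integrals has norm at most `2π r j`.
-/

open Metric Complex Set Topology Real

lemma sphere_subset_closedBall_diff_ball {X : Type*} [PseudoMetricSpace X] {c : X} {r ρ R : ℝ}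
    (hr : r ≤ ρ) (hR : ρ ≤ R) : sphere c ρ ⊆ closedBall c R \ ball c r := fun z hz => by
  simp_all [mem_sphere.1 hz]

lemma exists_lt_radii_subset_iUnion_ball {X ι : Type*} [PseudoMetricSpace X] [ProperSpace X]
    {E : Set X} (hE : IsClosed E) {c : ι → X} {ρ : ι → ℝ} (hρ : ∀ j, 0 < ρ j)
    (hdisj : Pairwise fun j k => Disjoint (closedBall (c j) (ρ j)) (closedBall (c k) (ρ k)))
    (hcover : E ⊆ ⋃ j, ball (c j) (ρ j)) :
    ∃ r : ι → ℝ, (∀ j, r j ∈ Ioo 0 (ρ j)) ∧ E ⊆ ⋃ j, ball (c j) (r j) := by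
  have hEρ : ∀ j, E ∩ closedBall (c j) (ρ j) ⊆ ball (c j) (ρ j) := by
    rintro j z ⟨hzE, hzj⟩
    obtain ⟨k, hk⟩ := mem_iUnion.1 (hcover hzE)
    rcases eq_or_ne k j with rfl | hkj
    · exact hk
    · exact absurd rfl ((hdisj hkj).ne_of_mem (ball_subset_closedBall hk) hzj)
  choose r hr hEr using fun j =>
    exists_pos_lt_subset_ball (hρ j) (hE.inter isClosed_closedBall) (hEρ j)
  refine ⟨r, hr, fun z hz => ?_⟩
  obtain ⟨k, hk⟩ := mem_iUnion.1 (hcover hz)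
  exact mem_iUnion.2 ⟨k, hEr k ⟨hz, ball_subset_closedBall hk⟩⟩

section CauchyTransform

variable {V : Type*} [NormedAddCommGroup V] [NormedSpace ℂ V]

noncomputable def cauchyTransform (c : ℂ) (R : ℝ) (g : ℂ → V) (w : ℂ) : V :=
  ∮ z in C(c, R), (z - w)⁻¹ • g z

lemma tendsto_zero_of_tendsto_smul_cobounded {f : ℂ → V} {a : V}
    (hf : Tendsto (fun w => w • f w) (cobounded ℂ) (𝓝 a)) :
    Tendsto f (cobounded ℂ) (𝓝 0) := by
  have h := (tendsto_inv₀_cobounded (α := ℂ)).smul hf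
  rw [zero_smul] at h
  refine h.congr' ?_
  filter_upwards [(isBounded_singleton (x := (0 : ℂ))).compl] with w hw
  rw [smul_smul, inv_mul_cancel₀ hw, one_smul]

variable {c : ℂ} {R : ℝ} {g : ℂ → V}

lemma circleIntegrable_sub_inv_pow_smul {w : ℂ} (hR : 0 ≤ R) (hg : ContinuousOn g (sphere c R))
    (hw : w ∉ sphere c R) (n : ℕ) : CircleIntegrable (fun z => (z - w)⁻¹ ^ n • g z) c R :=
  ((((continuousOn_id.sub continuousOn_const).inv₀ fun _ hz =>
    sub_ne_zero.2 (ne_of_mem_of_not_mem hz hw)).pow n).smul hg).circleIntegrable hR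

theorem differentiableAt_cauchyTransform (hR : 0 ≤ R) (hg : ContinuousOn g (sphere c R))
    {w : ℂ} (hw : w ∉ sphere c R) : DifferentiableAt ℂ (cauchyTransform c R g) w := by
  obtain ⟨ε, hε, hball⟩ := Metric.mem_nhds_iff.1 (isClosed_sphere.isOpen_compl.mem_nhds hw)
  set U := ball w (ε / 2)
  have hfar : ∀ x ∈ U, ∀ θ, ε / 2 ≤ ‖circleMap c R θ - x‖ := by
    intro x hx θ
    have : ε ≤ dist (circleMap c R θ) w := by
      by_contra! h
      exact hball (mem_ball.2 h) (circleMap_mem_sphere c hR θ)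
    rw [← dist_eq_norm]
    linarith [dist_triangle (circleMap c R θ) x w, mem_ball.1 hx]
  have hint : ∀ x ∈ U, ∀ n, CircleIntegrable (fun z => (z - x)⁻¹ ^ n • g z) c R :=
    fun x hx => circleIntegrable_sub_inv_pow_smul hR hg (hball (ball_subset_ball (by linarith) hx))
  have hU : U ∈ 𝓝 w := ball_mem_nhds w (by positivity)
  have hwU : w ∈ U := mem_ball_self (by positivity)
  -- differentiation under the integral sign, dominated on `U`, which stays `ε / 2` off the circle
  have key := intervalIntegral.hasDerivAt_integral_of_dominated_loc_of_deriv_le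
    (F := fun x θ => deriv (circleMap c R) θ •
      ((circleMap c R θ - x)⁻¹ • g (circleMap c R θ)))
    (F' := fun x θ => deriv (circleMap c R) θ •
      ((circleMap c R θ - x)⁻¹ ^ 2 • g (circleMap c R θ)))
    (bound := fun θ => R * (((ε / 2) ^ 2)⁻¹ * ‖g (circleMap c R θ)‖)) hU
    (eventually_of_mem hU fun x hx => by simpa using (hint x hx 1).out.def'.aestronglyMeasurable)
    (by simpa using (hint w hwU 1).out) (hint w hwU 2).out.def'.aestronglyMeasurable
    (Eventually.of_forall fun θ _ x hx => by
      rw [norm_smul, norm_smul, deriv_circleMap, norm_mul, norm_circleMap_zero, norm_I, mul_one,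
        abs_of_nonneg hR, norm_pow, norm_inv, ← inv_pow]
      gcongr
      exact hfar x hx θ)
    ((continuous_const.mul (continuous_const.mul (hg.comp_continuous (continuous_circleMap c R)
      (circleMap_mem_sphere c hR)).norm)).intervalIntegrable _ _)
    (Eventually.of_forall fun θ _ x hx => by
      have hne : circleMap c R θ - x ≠ 0 :=
        norm_pos_iff.1 ((half_pos hε).trans_le (hfar x hx θ))
      convert (((hasDerivAt_id x).const_sub _).inv hne).smul_const (g (circleMap c R θ))
        |>.const_smul (deriv (circleMap c R) θ) using 1
      · ext y; simp
      · simp [inv_pow])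
  exact key.2.differentiableAt

theorem tendsto_cauchyTransform_cobounded (hR : 0 ≤ R) (hg : ContinuousOn g (sphere c R)) :
    Tendsto (cauchyTransform c R g) (cobounded ℂ) (𝓝 0) := by
  obtain ⟨M, hM⟩ := (isCompact_sphere c R).exists_bound_of_continuousOn hg
  have hbound : ∀ w, R < dist w c →
      ‖cauchyTransform c R g w‖ ≤ 2 * π * R * (M / (dist w c - R)) := by
    intro w hw
    refine circleIntegral.norm_integral_le_of_norm_le_const hR fun z hz => ?_
    have hzw : dist w c - R ≤ ‖z - w‖ := by
      have := dist_triangle w z c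
      rw [mem_sphere.1 hz, dist_comm w z] at this
      rw [← dist_eq_norm]
      linarith
    rw [norm_smul, norm_inv, inv_mul_eq_div]
    exact div_le_div₀ ((norm_nonneg _).trans (hM z hz)) (hM z hz) (by linarith) hzw
  have hlim : Tendsto (fun t => 2 * π * R * (M / (t - R))) atTop (𝓝 0) := by
    simpa [sub_eq_add_neg] using (tendsto_const_nhds.div_atTop
      (tendsto_atTop_add_const_right _ (-R) tendsto_id)).const_mul (2 * π * R)
  refine squeeze_zero_norm' ?_ (hlim.comp (tendsto_dist_right_cobounded_atTop c))
  filter_upwards [(tendsto_dist_right_cobounded_atTop c).eventually_gt_atTop R] with w hw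
  exact hbound w hw

theorem tendsto_smul_cauchyTransform_cobounded (hR : 0 ≤ R) (hg : ContinuousOn g (sphere c R)) :
    Tendsto (fun w => w • cauchyTransform c R g w) (cobounded ℂ)
      (𝓝 (-∮ z in C(c, R), g z)) := by
  -- `w • cauchyTransform c R g w = cauchyTransform c R (fun z => z • g z) w - ∮ g`
  have h := (tendsto_cauchyTransform_cobounded (g := fun z => z • g z) hR
    (continuousOn_id.smul hg)).sub_const (∮ z in C(c, R), g z)
  rw [zero_sub] at h
  refine h.congr' ?_
  filter_upwards [(isBounded_sphere (x := c) (r := R)).compl] with w hw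
  have hzg : CircleIntegrable (fun z => (z - w)⁻¹ • z • g z) c R := by
    simpa using circleIntegrable_sub_inv_pow_smul hR (continuousOn_id.smul hg) hw 1
  rw [cauchyTransform, cauchyTransform,
    ← circleIntegral.integral_sub hzg (hg.circleIntegrable hR), ← circleIntegral.integral_smul]
  refine circleIntegral.integral_congr hR fun z hz => ?_
  have hzw : z - w ≠ 0 := sub_ne_zero.2 (ne_of_mem_of_not_mem hz hw)
  have hcoef : (z - w)⁻¹ * z = w * (z - w)⁻¹ + 1 := by field_simp; ring
  rw [smul_smul, smul_smul, hcoef, add_smul, one_smul, add_sub_cancel_right]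

variable [CompleteSpace V]

lemma circleIntegral_dslope (hR : 0 ≤ R) (hg : ContinuousOn g (sphere c R)) {w : ℂ}
    (hw : w ∉ sphere c R) :
    ∮ z in C(c, R), dslope g w z =
      cauchyTransform c R g w - (∮ z in C(c, R), (z - w)⁻¹) • g w := by
  rw [← circleIntegral.integral_smul_const, cauchyTransform, ← circleIntegral.integral_sub
    (by simpa using circleIntegrable_sub_inv_pow_smul hR hg hw 1)
    (by simpa using
      circleIntegrable_sub_inv_pow_smul (g := fun _ => g w) hR continuousOn_const hw 1)]
  refine circleIntegral.integral_congr hR fun z hz => ?_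
  rw [dslope_of_ne _ (ne_of_mem_of_not_mem hz hw), slope_def_module, smul_sub]

lemma circleIntegral_sub_inv_of_notMem_closedBall (hR : 0 ≤ R) {w : ℂ}
    (hw : w ∉ closedBall c R) : ∮ z in C(c, R), (z - w)⁻¹ = 0 := by
  have hne : ∀ z ∈ closedBall c R, z - w ≠ 0 := fun z hz =>
    sub_ne_zero.2 (ne_of_mem_of_not_mem hz hw)
  exact circleIntegral_eq_zero_of_differentiable_on_off_countable hR countable_empty
    ((continuousOn_id.sub continuousOn_const).inv₀ hne)
    fun z hz => (differentiableAt_id.sub_const w).inv (hne z (ball_subset_closedBall hz.1))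

theorem cauchyTransform_sub_cauchyTransform {r : ℝ} (hr : 0 < r) (hrR : r ≤ R)
    (hc : ContinuousOn g (closedBall c R \ ball c r))
    (hd : ∀ z ∈ ball c R \ closedBall c r, DifferentiableAt ℂ g z) {w : ℂ}
    (hw : w ∈ ball c R \ closedBall c r) :
    cauchyTransform c R g w - cauchyTransform c r g w = (2 * π * I : ℂ) • g w := by
  have hnhds : closedBall c R \ ball c r ∈ 𝓝 w :=
    mem_of_superset ((isOpen_ball.sdiff isClosed_closedBall).mem_nhds hw)
      (sdiff_subset_sdiff ball_subset_closedBall ball_subset_closedBall)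
  have heq := circleIntegral_eq_of_differentiable_on_annulus_off_countable hr hrR
    (countable_singleton w) ((continuousOn_dslope hnhds).2 ⟨hc, hd w hw⟩)
    fun z hz => (differentiableAt_dslope_of_ne hz.2).2 (hd z hz.1)
  rw [circleIntegral_dslope (hr.le.trans hrR)
      (hc.mono (sphere_subset_closedBall_diff_ball hrR le_rfl))
      fun h => (mem_ball.1 hw.1).ne (mem_sphere.1 h),
    circleIntegral_dslope hr.le (hc.mono (sphere_subset_closedBall_diff_ball le_rfl hrR))
      fun h => hw.2 (sphere_subset_closedBall h),
    circleIntegral.integral_sub_inv_of_mem_ball hw.1,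
    circleIntegral_sub_inv_of_notMem_closedBall hr.le hw.2, zero_smul, sub_zero] at heq
  rw [← heq, sub_sub_cancel]

end CauchyTransform

section CircleFamily

variable {V : Type*} [NormedAddCommGroup V] [NormedSpace ℂ V]
  {ι : Type*} {c : ι → ℂ} {r R : ι → ℝ} {g : ℂ → V}

lemma closedBall_diff_ball_subset_compl_iUnion_ball (hrR : ∀ j, r j < R j)
    (hdisj : Pairwise fun j k => Disjoint (closedBall (c j) (R j)) (closedBall (c k) (R k)))
    (k : ι) : closedBall (c k) (R k) \ ball (c k) (r k) ⊆ (⋃ j, ball (c j) (r j))ᶜ := by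
  intro z hz hzr
  obtain ⟨j, hj⟩ := mem_iUnion.1 hzr
  rcases eq_or_ne j k with rfl | hjk
  · exact hz.2 hj
  · exact (hdisj hjk).ne_of_mem (ball_subset_closedBall.trans
      (closedBall_subset_closedBall (hrR j).le) hj) hz.1 rfl

lemma continuousOn_closedBall_diff_ball (hrR : ∀ j, r j < R j)
    (hdisj : Pairwise fun j k => Disjoint (closedBall (c j) (R j)) (closedBall (c k) (R k)))
    (hg : ∀ z ∉ ⋃ j, ball (c j) (r j), DifferentiableAt ℂ g z) (k : ι) :
    ContinuousOn g (closedBall (c k) (R k) \ ball (c k) (r k)) := fun z hz =>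
  (hg z (closedBall_diff_ball_subset_compl_iUnion_ball hrR hdisj k hz)).continuousAt
    |>.continuousWithinAt

lemma continuousOn_sphere_of_forall_differentiableAt (hrR : ∀ j, r j < R j)
    (hdisj : Pairwise fun j k => Disjoint (closedBall (c j) (R j)) (closedBall (c k) (R k)))
    (hg : ∀ z ∉ ⋃ j, ball (c j) (r j), DifferentiableAt ℂ g z) (k : ι) :
    ContinuousOn g (sphere (c k) (r k)) :=
  (continuousOn_closedBall_diff_ball hrR hdisj hg k).mono
    (sphere_subset_closedBall_diff_ball le_rfl (hrR k).le)

variable [Fintype ι]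

/-- On `ball (c k) (R k)` the `k`-th correction term replaces
`2πi g + cauchyTransform (c k) (r k) g` by `cauchyTransform (c k) (R k) g`, which is holomorphic
there. -/
noncomputable def gluedCauchyTransform (c : ι → ℂ) (r R : ι → ℝ) (g : ℂ → V) (w : ℂ) : V :=
  (2 * π * I : ℂ) • g w + ∑ j, cauchyTransform (c j) (r j) g w +
    ∑ k, (ball (c k) (R k)).indicator (fun w => cauchyTransform (c k) (R k) g w -
      cauchyTransform (c k) (r k) g w - (2 * π * I : ℂ) • g w) w

lemma gluedCauchyTransform_eq_of_mem_ball [DecidableEq ι]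
    (hdisj : Pairwise fun j k => Disjoint (closedBall (c j) (R j)) (closedBall (c k) (R k)))
    {k : ι} {w : ℂ} (hw : w ∈ ball (c k) (R k)) :
    gluedCauchyTransform c r R g w =
      cauchyTransform (c k) (R k) g w +
        ∑ j ∈ Finset.univ.erase k, cauchyTransform (c j) (r j) g w := by
  rw [gluedCauchyTransform, Finset.sum_eq_single k (fun j _ hjk => indicator_of_notMem
    (fun h => (hdisj hjk).ne_of_mem (ball_subset_closedBall h) (ball_subset_closedBall hw) rfl) _)
    (by simp), indicator_of_mem hw, ← Finset.add_sum_erase _ _ (Finset.mem_univ k)]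
  abel

variable [CompleteSpace V]

lemma gluedCauchyTransform_eq_of_notMem (hr : ∀ j, 0 < r j) (hrR : ∀ j, r j < R j)
    (hdisj : Pairwise fun j k => Disjoint (closedBall (c j) (R j)) (closedBall (c k) (R k)))
    (hg : ∀ z ∉ ⋃ j, ball (c j) (r j), DifferentiableAt ℂ g z) {w : ℂ}
    (hw : w ∉ ⋃ j, closedBall (c j) (r j)) :
    gluedCauchyTransform c r R g w =
      (2 * π * I : ℂ) • g w + ∑ j, cauchyTransform (c j) (r j) g w := by
  rw [gluedCauchyTransform, add_eq_left]
  refine Finset.sum_eq_zero fun k _ => ?_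
  by_cases hk : w ∈ ball (c k) (R k)
  · rw [indicator_of_mem hk, cauchyTransform_sub_cauchyTransform (hr k) (hrR k).le
      (continuousOn_closedBall_diff_ball hrR hdisj hg k)
      (fun z hz => hg z (closedBall_diff_ball_subset_compl_iUnion_ball hrR hdisj k
        (sdiff_subset_sdiff ball_subset_closedBall ball_subset_closedBall hz)))
      ⟨hk, fun h => hw (mem_iUnion.2 ⟨k, h⟩)⟩, sub_self]
  · exact indicator_of_notMem hk _

theorem differentiable_gluedCauchyTransform (hr : ∀ j, 0 < r j) (hrR : ∀ j, r j < R j)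
    (hdisj : Pairwise fun j k => Disjoint (closedBall (c j) (R j)) (closedBall (c k) (R k)))
    (hg : ∀ z ∉ ⋃ j, ball (c j) (r j), DifferentiableAt ℂ g z) :
    Differentiable ℂ (gluedCauchyTransform c r R g) := by
  classical
  have hT : ∀ j w, w ∉ sphere (c j) (r j) →
      DifferentiableAt ℂ (cauchyTransform (c j) (r j) g) w :=
    fun j _ => differentiableAt_cauchyTransform (hr j).le
      (continuousOn_sphere_of_forall_differentiableAt hrR hdisj hg j)
  intro w
  by_cases hw : ∃ k, w ∈ ball (c k) (R k)
  · obtain ⟨k, hk⟩ := hw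
    refine DifferentiableAt.congr_of_eventuallyEq ?_ (eventually_of_mem (isOpen_ball.mem_nhds hk)
      fun w hw => gluedCauchyTransform_eq_of_mem_ball hdisj hw)
    refine (differentiableAt_cauchyTransform ((hr k).trans (hrR k)).le
      ((continuousOn_closedBall_diff_ball hrR hdisj hg k).mono
        (sphere_subset_closedBall_diff_ball (hrR k).le le_rfl))
      fun h => (mem_ball.1 hk).ne (mem_sphere.1 h)).add
      (DifferentiableAt.fun_sum fun j hj => hT j w fun h => ?_)
    exact (hdisj (Finset.ne_of_mem_erase hj)).ne_of_mem (sphere_subset_closedBall.trans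
      (closedBall_subset_closedBall (hrR j).le) h) (ball_subset_closedBall hk) rfl
  · simp only [not_exists] at hw
    have hwB : w ∉ ⋃ j, closedBall (c j) (r j) := by
      simpa only [mem_iUnion, not_exists] using fun j h => hw j (closedBall_subset_ball (hrR j) h)
    refine DifferentiableAt.congr_of_eventuallyEq ?_ (eventually_of_mem
      ((isClosed_iUnion_of_finite fun j => isClosed_closedBall).isOpen_compl.mem_nhds hwB)
      fun w hw => gluedCauchyTransform_eq_of_notMem hr hrR hdisj hg hw)
    refine ((hg w fun h => hwB ?_).const_smul _).add
      (DifferentiableAt.fun_sum fun j _ => hT j w fun h => hwB ?_)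
    · exact iUnion_mono (fun j => ball_subset_closedBall) h
    · exact mem_iUnion.2 ⟨j, sphere_subset_closedBall h⟩

theorem two_pi_I_smul_eq_neg_sum_cauchyTransform (hr : ∀ j, 0 < r j) (hrR : ∀ j, r j < R j)
    (hdisj : Pairwise fun j k => Disjoint (closedBall (c j) (R j)) (closedBall (c k) (R k)))
    (hg : ∀ z ∉ ⋃ j, ball (c j) (r j), DifferentiableAt ℂ g z)
    (hg0 : Tendsto g (cobounded ℂ) (𝓝 0)) {w : ℂ} (hw : w ∉ ⋃ j, closedBall (c j) (r j)) :
    (2 * π * I : ℂ) • g w = -∑ j, cauchyTransform (c j) (r j) g w := by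
  have hB : (⋃ j, closedBall (c j) (r j))ᶜ ∈ cobounded ℂ :=
    (isBounded_iUnion.2 fun j => isBounded_closedBall).compl
  have hlim : Tendsto (gluedCauchyTransform c r R g) (cobounded ℂ) (𝓝 0) := by
    have h := (hg0.const_smul (2 * π * I : ℂ)).add (tendsto_finsetSum Finset.univ fun j _ =>
      tendsto_cauchyTransform_cobounded (hr j).le
        (continuousOn_sphere_of_forall_differentiableAt hrR hdisj hg j))
    rw [smul_zero, Finset.sum_const_zero, add_zero] at h
    exact h.congr' (eventually_of_mem hB fun w hw =>
      (gluedCauchyTransform_eq_of_notMem hr hrR hdisj hg hw).symm)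
  have hzero := (differentiable_gluedCauchyTransform hr hrR hdisj hg).apply_eq_of_tendsto_cocompact
    w (by rwa [← cobounded_eq_cocompact])
  rw [gluedCauchyTransform_eq_of_notMem hr hrR hdisj hg hw] at hzero
  exact eq_neg_of_add_eq_zero_left hzero

theorem sum_circleIntegral_eq_two_pi_I_smul (hr : ∀ j, 0 < r j) (hrR : ∀ j, r j < R j)
    (hdisj : Pairwise fun j k => Disjoint (closedBall (c j) (R j)) (closedBall (c k) (R k)))
    (hg : ∀ z ∉ ⋃ j, ball (c j) (r j), DifferentiableAt ℂ g z) {L d : V}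
    (hd : Tendsto (fun w => w • (g w - L)) (cobounded ℂ) (𝓝 d)) :
    ∑ j, ∮ z in C(c j, r j), g z = (2 * π * I : ℂ) • d := by
  have hgL : ∀ z ∉ ⋃ j, ball (c j) (r j), DifferentiableAt ℂ (fun z => g z - L) z :=
    fun z hz => (hg z hz).sub_const L
  have hsphere := continuousOn_sphere_of_forall_differentiableAt hrR hdisj hg
  have hconst : ∀ j, ∮ z in C(c j, r j), (g z - L) = ∮ z in C(c j, r j), g z := fun j => by
    rw [circleIntegral.integral_sub ((hsphere j).circleIntegrable (hr j).le)
      (circleIntegrable_const L _ _), diffContOnCl_const.circleIntegral_eq_zero (hr j).le, sub_zero]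
  have hlim : Tendsto (fun w => w • ((2 * π * I : ℂ) • (g w - L))) (cobounded ℂ)
      (𝓝 ((2 * π * I : ℂ) • d)) := by
    simpa only [smul_comm _ (2 * π * I : ℂ)] using hd.const_smul (2 * π * I : ℂ)
  have hlim' : Tendsto (fun w => -∑ j, w • cauchyTransform (c j) (r j) (fun z => g z - L) w)
      (cobounded ℂ) (𝓝 (∑ j, ∮ z in C(c j, r j), g z)) := by
    simpa [hconst] using (tendsto_finsetSum Finset.univ fun j _ =>
      tendsto_smul_cauchyTransform_cobounded (g := fun z => g z - L) (hr j).le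
        ((hsphere j).sub continuousOn_const)).neg
  refine tendsto_nhds_unique hlim' (hlim.congr' ?_)
  filter_upwards [(isBounded_iUnion.2 fun j => isBounded_closedBall (x := c j) (r := r j)).compl]
    with w hw
  rw [two_pi_I_smul_eq_neg_sum_cauchyTransform hr hrR hdisj hgL
    (tendsto_zero_of_tendsto_smul_cobounded hd) hw, smul_neg, Finset.smul_sum]

end CircleFamily

/-- If the compact set `E` is covered by the open balls of a system of pairwise
disjoint closed balls of radii `ρ j > 0`, then every admissible function for `E`
satisfies `‖f′(∞)‖ ≤ ∑ ρ j`. -/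
theorem admissible_deriv_le_of_ball_cover (E : Set ℂ) (hE : IsCompact E)
    (m : ℕ) (c : Fin m → ℂ) (ρ : Fin m → ℝ) (hρ : ∀ j, 0 < ρ j)
    (hdisj : Pairwise fun j k =>
      Disjoint (Metric.closedBall (c j) (ρ j)) (Metric.closedBall (c k) (ρ k)))
    (hcover : E ⊆ ⋃ j, Metric.ball (c j) (ρ j))
    (f : ℂ → ℂ) (L d : ℂ) (hf : Admissible E f L d) :
    ‖d‖ ≤ ∑ j, ρ j := by
  obtain ⟨hfd, hf1, -, hfd'⟩ := hf
  obtain ⟨r, hr, hEr⟩ := exists_lt_radii_subset_iUnion_ball hE.isClosed hρ hdisj hcover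
  have hEc : (⋃ j, ball (c j) (r j))ᶜ ⊆ Eᶜ := compl_subset_compl.2 hEr
  have hres := sum_circleIntegral_eq_two_pi_I_smul (fun j => (hr j).1) (fun j => (hr j).2) hdisj
    (fun z hz => hfd.differentiableAt (hE.isClosed.isOpen_compl.mem_nhds (hEc hz)))
    (by simpa only [smul_eq_mul] using hfd')
  have hcircle : ∀ j, ‖∮ z in C(c j, r j), f z‖ ≤ 2 * π * ρ j := fun j => calc
    ‖∮ z in C(c j, r j), f z‖ ≤ 2 * π * r j * 1 :=
      circleIntegral.norm_integral_le_of_norm_le_const (hr j).1.le fun z hz => hf1 z <| hEc <|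
        closedBall_diff_ball_subset_compl_iUnion_ball (fun j => (hr j).2) hdisj j <|
          sphere_subset_closedBall_diff_ball le_rfl (hr j).2.le hz
    _ ≤ 2 * π * ρ j := by rw [mul_one]; gcongr; exact (hr j).2.le
  have h2π : 2 * π * ‖d‖ ≤ 2 * π * ∑ j, ρ j := calc
    2 * π * ‖d‖ = ‖(2 * π * I : ℂ) • d‖ := by simp [abs_of_pos pi_pos]
    _ = ‖∑ j, ∮ z in C(c j, r j), f z‖ := by rw [hres]
    _ ≤ ∑ j, ‖∮ z in C(c j, r j), f z‖ := norm_sum_le _ _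
    _ ≤ ∑ j, 2 * π * ρ j := Finset.sum_le_sum fun j _ => hcircle j
    _ = 2 * π * ∑ j, ρ j := (Finset.mul_sum _ _ _).symm
  exact le_of_mul_le_mul_left h2π (by positivity)
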